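/- Let V: ℤ → ℝ be bounded by C_V ≥ 1 and suppose the 2×2 transfer matrices A(j) = [[E − V(j), −1],[1, 0]] satisfy ‖A(k+n)⋯A(k+1)‖ ≤ e^{Λn} for all k ∈ ℤ and n ≥ n_0. Let q ≥ n_0, β > Λ, and suppose |V(j) − V(j + q)| ≤ e^{−βq} for all 1 ≤ j ≤ iq for some positive integer i. Then ‖A_q(from position (i−1)q) − A_q(from position 0)‖ ≤ (i−1)·q·C·e^{(Λ−β)q}, where A_q(from position k) = A(k+q)⋯A(k+1) and C depends only on n_0 and C_V. -/

import Mathlib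

/-!
Position `(i-1)q + j` is reached from `j` by `i-1` shifts of `q`, so the one-step transfer
matrices of the two blocks differ by at most `(i-1) e^{-βq}`. Telescoping the difference of the
two products, each of its `q` terms is a block of length `q-1-j`, one such difference and a
block of length `j`; the two blocks together cost at most `C_V^{2n₀} e^{Λq}`, blocks shorter
than `n₀` being bounded trivially by `C_V^{n₀}`.
-/

open scoped Matrix.Norms.L2Operator

/-- The transfer matrix at energy `E` over the potential `V`. -/
noncomputable def transferMat (V : ℤ → ℝ) (E : ℝ) (j : ℤ) : Matrix (Fin 2) (Fin 2) ℝ :=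
  !![E - V j, -1; 1, 0]

/-- The `n`-step transfer matrix starting at position `k`:
`A(k+n) ⋯ A(k+2) A(k+1)`. -/
noncomputable def transferProd (V : ℤ → ℝ) (E : ℝ) (k : ℤ) (n : ℕ) :
    Matrix (Fin 2) (Fin 2) ℝ :=
  (List.ofFn (fun i : Fin n => transferMat V E (k + n - (i : ℕ)))).prod

section DescProd

variable {R : Type*}

def descProd [Monoid R] (f : ℕ → R) : ℕ → R
  | 0 => 1
  | n + 1 => f n * descProd f n

theorem descProd_sub_descProd [Ring R] (f g : ℕ → R) (n : ℕ) :
    descProd f n - descProd g n =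
      ∑ j ∈ Finset.range n,
        descProd (fun m => f (j + 1 + m)) (n - (j + 1)) * (f j - g j) * descProd g j := by
  induction n with
  | zero => simp [descProd]
  | succ n ih =>
    have prefix_succ : ∀ j ∈ Finset.range n,
        descProd (fun m => f (j + 1 + m)) (n + 1 - (j + 1)) =
          f n * descProd (fun m => f (j + 1 + m)) (n - (j + 1)) := by
      intro j hj
      have hj : j < n := Finset.mem_range.mp hj
      rw [show n + 1 - (j + 1) = n - (j + 1) + 1 by omega, descProd,
        show j + 1 + (n - (j + 1)) = n by omega]
    rw [Finset.sum_range_succ, Finset.sum_congr rfl fun j hj => by rw [prefix_succ j hj],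
      Nat.sub_self]
    simp only [mul_assoc, ← Finset.mul_sum]
    simp only [← mul_assoc, ← ih, descProd]
    noncomm_ring

theorem norm_descProd_sub_descProd_le [NormedRing R] (f g : ℕ → R) (n : ℕ) :
    ‖descProd f n - descProd g n‖ ≤
      ∑ j ∈ Finset.range n,
        ‖descProd (fun m => f (j + 1 + m)) (n - (j + 1))‖ * ‖f j - g j‖ * ‖descProd g j‖ := by
  rw [descProd_sub_descProd]
  refine (norm_sum_le _ _).trans (Finset.sum_le_sum fun j _ => ?_)
  exact (norm_mul_le _ _).trans (by gcongr; exact norm_mul_le _ _)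

end DescProd

theorem abs_sub_iterated_shift_le {V : ℤ → ℝ} {q N : ℕ} {ε : ℝ}
    (hV : ∀ j : ℕ, 1 ≤ j → j ≤ N → |V j - V (j + q)| ≤ ε) {a m : ℕ} (ha : 1 ≤ a)
    (hm : a + m * q ≤ N) :
    |V a - V (a + m * q)| ≤ m * ε := by
  have step : ∀ l ∈ Finset.range m, dist (V (a + l * q)) (V (a + (l + 1) * q)) ≤ ε := by
    intro l hl
    have hl : l * q ≤ m * q := Nat.mul_le_mul_right q (Finset.mem_range.mp hl).le
    have h := hV (a + l * q) (by omega) (by omega)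
    rw [Real.dist_eq]
    convert h using 4 <;> push_cast <;> ring
  calc |V a - V (a + m * q)| = dist (V (a + 0 * q)) (V (a + m * q)) := by
        simp [Real.dist_eq]
    _ ≤ ∑ l ∈ Finset.range m, dist (V (a + l * q)) (V (a + (l + 1) * q)) :=
        dist_le_range_sum_dist (fun l : ℕ => V (a + l * q)) m
    _ ≤ ∑ _l ∈ Finset.range m, ε := Finset.sum_le_sum step
    _ = m * ε := by simp

section Transfer

variable (V : ℤ → ℝ) (E : ℝ)

theorem norm_transferMat_sub_transferMat (a b : ℤ) :
    ‖transferMat V E a - transferMat V E b‖ = |V a - V b| := by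
  have h : transferMat V E a - transferMat V E b = Matrix.diagonal ![V b - V a, 0] := by
    ext i j
    fin_cases i <;> fin_cases j <;> simp [transferMat]
  rw [h, Matrix.l2_opNorm_diagonal, abs_sub_comm]
  simp [Pi.norm_def, Fin.univ_succ]

theorem transferProd_succ (k : ℤ) (n : ℕ) :
    transferProd V E k (n + 1) = transferMat V E (k + n + 1) * transferProd V E k n := by
  unfold transferProd
  rw [List.ofFn_succ, List.prod_cons]
  congr 1
  · congr 1
    simp
    ring
  · exact congrArg List.prod (congrArg List.ofFn (funext fun i => by
      congr 1
      simp only [Fin.val_succ]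
      push_cast
      ring))

theorem descProd_transferMat (k : ℤ) (n : ℕ) :
    descProd (fun j => transferMat V E (k + 1 + j)) n = transferProd V E k n := by
  induction n with
  | zero => simp [descProd, transferProd]
  | succ n ih =>
    rw [transferProd_succ, descProd, ih]
    congr 2
    ring

theorem norm_transferProd_le_pow {C_V : ℝ} (hA : ∀ j, ‖transferMat V E j‖ ≤ C_V) (k : ℤ)
    (n : ℕ) : ‖transferProd V E k n‖ ≤ C_V ^ n := by
  induction n with
  | zero => simp [transferProd]
  | succ n ih =>
    rw [transferProd_succ, pow_succ']
    exact (norm_mul_le _ _).trans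
      (mul_le_mul (hA _) ih (norm_nonneg _) ((norm_nonneg _).trans (hA 0)))

theorem norm_transferProd_le {n₀ : ℕ} {C_V Λ : ℝ} (hCV : 1 ≤ C_V)
    (hA : ∀ j, ‖transferMat V E j‖ ≤ C_V)
    (hP : ∀ k n, n₀ ≤ n → ‖transferProd V E k n‖ ≤ Real.exp (Λ * n)) (hΛ : 0 ≤ Λ)
    (k : ℤ) (n : ℕ) : ‖transferProd V E k n‖ ≤ C_V ^ n₀ * Real.exp (Λ * n) := by
  rcases le_or_gt n₀ n with h | h
  · exact (hP k n h).trans (le_mul_of_one_le_left (Real.exp_pos _).le (one_le_pow₀ hCV))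
  · calc ‖transferProd V E k n‖ ≤ C_V ^ n := norm_transferProd_le_pow V E hA k n
      _ ≤ C_V ^ n₀ := pow_le_pow_right₀ hCV h.le
      _ ≤ C_V ^ n₀ * Real.exp (Λ * n) :=
          le_mul_of_one_le_right (by positivity) (Real.one_le_exp (by positivity))

theorem norm_transferProd_sub_transferProd_le {D Λ δ : ℝ} (hΛ : 0 ≤ Λ)
    (hP : ∀ k n, ‖transferProd V E k n‖ ≤ D * Real.exp (Λ * n)) {K K' : ℤ} {q : ℕ}
    (hδ : ∀ j : ℕ, j < q → |V (K + 1 + j) - V (K' + 1 + j)| ≤ δ) :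
    ‖transferProd V E K q - transferProd V E K' q‖ ≤ q * (D ^ 2 * δ * Real.exp (Λ * q)) := by
  have hD : 0 ≤ D := nonneg_of_mul_nonneg_left ((norm_nonneg _).trans (hP 0 0)) (Real.exp_pos _)
  rw [← descProd_transferMat, ← descProd_transferMat]
  refine ((norm_descProd_sub_descProd_le _ _ q).trans
    (Finset.sum_le_sum (g := fun _ => D ^ 2 * δ * Real.exp (Λ * q)) fun j hj => ?_)).trans_eq
    (by simp)
  have hj : j < q := Finset.mem_range.mp hj
  have hprefix : ‖descProd (fun m => transferMat V E (K + 1 + ↑(j + 1 + m))) (q - (j + 1))‖ ≤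
      D * Real.exp (Λ * ((q : ℝ) - 1 - j)) := by
    convert hP (K + (j + 1)) (q - (j + 1)) using 3
    · rw [← descProd_transferMat]
      congr 1
      funext m
      push_cast
      ring_nf
    · push_cast [Nat.cast_sub (show j + 1 ≤ q by omega)]
      ring
  have hsuffix := hP K' j
  rw [← descProd_transferMat] at hsuffix
  have hmid := (norm_transferMat_sub_transferMat V E _ _).trans_le (hδ j hj)
  have hδ₀ : 0 ≤ δ := (norm_nonneg _).trans hmid
  calc _ ≤ D * Real.exp (Λ * ((q : ℝ) - 1 - j)) * δ * (D * Real.exp (Λ * j)) := by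
        gcongr
    _ = D ^ 2 * δ * Real.exp (Λ * (q - 1)) := by
        rw [show Λ * ((q : ℝ) - 1) = Λ * (q - 1 - j) + Λ * j by ring, Real.exp_add]
        ring
    _ ≤ D ^ 2 * δ * Real.exp (Λ * q) := by
        gcongr
        linarith

end Transfer

/-- Telescoping estimate: if the transfer matrices satisfy `‖A_n(k)‖ ≤ e^{Λn}` for
`n ≥ n₀` and `|V(j) − V(j+q)| ≤ e^{−βq}` for `1 ≤ j ≤ iq`, then the `q`-blocks starting at
positions `(i−1)q` and `0` differ by at most `(i−1)·q·C·e^{(Λ−β)q}`, where `C` depends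
only on `n₀` and the bound `C_V` on the one-step transfer matrices. -/
theorem stmt_18 (n₀ : ℕ) (C_V : ℝ) (hCV : 1 ≤ C_V) :
    ∃ C : ℝ, 0 < C ∧
      ∀ (V : ℤ → ℝ) (E Λ β : ℝ) (q i : ℕ),
        (∀ j : ℤ, ‖transferMat V E j‖ ≤ C_V) →
        (∀ k : ℤ, ∀ n : ℕ, n₀ ≤ n → ‖transferProd V E k n‖ ≤ Real.exp (Λ * n)) →
        0 ≤ Λ → Λ < β → n₀ ≤ q → 1 ≤ i →
        (∀ j : ℕ, 1 ≤ j → j ≤ i * q → |V j - V (j + q)| ≤ Real.exp (-β * q)) →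
        ‖transferProd V E (((i : ℤ) - 1) * q) q - transferProd V E 0 q‖ ≤
          ((i : ℝ) - 1) * q * C * Real.exp ((Λ - β) * q) := by
  refine ⟨(C_V ^ n₀) ^ 2, by positivity, ?_⟩
  intro V E Λ β q i hA hP hΛ _ _ hi hV
  obtain ⟨m, rfl⟩ : ∃ m, i = m + 1 := ⟨i - 1, by omega⟩
  have hdrift : ∀ j : ℕ, j < q →
      |V (((m + 1 : ℕ) - 1) * q + 1 + j) - V (0 + 1 + j)| ≤ m * Real.exp (-β * q) := by
    intro j hj
    rw [abs_sub_comm]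
    convert abs_sub_iterated_shift_le hV (a := 1 + j) (m := m) (by omega)
      (by nlinarith) using 4 <;> push_cast <;> ring
  calc _ ≤ q * ((C_V ^ n₀) ^ 2 * (m * Real.exp (-β * q)) * Real.exp (Λ * q)) :=
        norm_transferProd_sub_transferProd_le V E hΛ (norm_transferProd_le V E hCV hA hP hΛ)
          hdrift
    _ = _ := by
        rw [show (Λ - β) * q = Λ * q + -β * q by ring, Real.exp_add]
        push_cast
        ring
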